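/- Let N and k both be even positive integers, and let m be a divisor of N such that 2*m^2 divides N*k. Then the number of divisors d of N satisfying gcd(d, N*k/(2*d)) = m is exactly 2^(p_m + t_m). -/

import Mathlib

/-- `p_m`: the number of odd primes dividing `N*m'/m^2` but not `k/m'`, where `m' = gcd(m,k)`. -/
def pm (N k m : ℕ) : ℕ :=
  ((N * Nat.gcd m k / m ^ 2).primeFactors.filter
    (fun p => p ≠ 2 ∧ ¬ p ∣ k / Nat.gcd m k)).card

/-- `t_m`: equal to `0` if `N*m'/m^2` is odd, or `4 ∣ k/m'`, or both
`N*m'/m^2 ≡ 2 (mod 4)` and `k/m'` is odd; and equal to `1` otherwise. -/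
def tm (N k m : ℕ) : ℕ :=
  if Odd (N * Nat.gcd m k / m ^ 2) ∨ 4 ∣ k / Nat.gcd m k ∨
      ((N * Nat.gcd m k / m ^ 2) % 4 = 2 ∧ Odd (k / Nat.gcd m k)) then 0 else 1

/-!
Write `n, κ, μ, s` for the exponents of a prime `q` in `N, k, m` and `M = N k / 2`, so that
`s = n + κ - [q = 2]`. For `d ∣ N` with exponent `a`, the exponent of `gcd(d, M / d)` is
`min(a, s - a)`, so `gcd(d, M / d) = m` forces `a = μ` or `a = s - μ`; the second value is a new
admissible exponent exactly when `2μ < s` and `s - μ ≤ n`. The solutions `d` are thus in bijection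
with the subsets of the set `Q = gcdSwitchPrimes N M m` of such primes, and reading off `p_m` at
the odd primes and `t_m` at `2` gives `p_m + t_m = |Q|`.
-/

section CountDivisors

variable {N M m : ℕ}

lemma min_tsub_eq_iff {a n s μ : ℕ} (ha : a ≤ n) (has : a ≤ s) (hμ : 2 * μ ≤ s) :
    min a (s - a) = μ ↔ a = μ ∨ (2 * μ < s ∧ s - μ ≤ n ∧ a = s - μ) := by
  omega

def gcdSwitchPrimes (N M m : ℕ) : Finset ℕ :=
  N.primeFactors.filter fun p =>
    2 * m.factorization p < M.factorization p ∧
      M.factorization p - m.factorization p ≤ N.factorization p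

lemma prime_of_mem_gcdSwitchPrimes {p : ℕ} (hp : p ∈ gcdSwitchPrimes N M m) : p.Prime :=
  Nat.prime_of_mem_primeFactors (Finset.mem_of_mem_filter p hp)

lemma mem_gcdSwitchPrimes (hN : N ≠ 0) {p : ℕ} :
    p ∈ gcdSwitchPrimes N M m ↔ p.Prime ∧ 2 * m.factorization p < M.factorization p ∧
      M.factorization p - m.factorization p ≤ N.factorization p := by
  simp only [gcdSwitchPrimes, Finset.mem_filter, Nat.mem_primeFactors]
  refine ⟨fun ⟨⟨hp, _, _⟩, h⟩ => ⟨hp, h⟩, fun ⟨hp, h⟩ => ⟨⟨hp, ?_, hN⟩, h⟩⟩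
  rw [hp.dvd_iff_one_le_factorization hN]
  omega

def switchedDivisor (M m : ℕ) (T : Finset ℕ) : ℕ :=
  m * ∏ p ∈ T, p ^ (M.factorization p - 2 * m.factorization p)

lemma switchedDivisor_ne_zero (hm : m ≠ 0) {T : Finset ℕ} (hT : ∀ p ∈ T, p.Prime) :
    switchedDivisor M m T ≠ 0 :=
  mul_ne_zero hm <| Finset.prod_ne_zero_iff.2 fun p hp => pow_ne_zero _ (hT p hp).ne_zero

lemma factorization_switchedDivisor (hm : m ≠ 0) {T : Finset ℕ} (hT : ∀ p ∈ T, p.Prime)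
    (q : ℕ) : (switchedDivisor M m T).factorization q =
      m.factorization q + if q ∈ T then M.factorization q - 2 * m.factorization q else 0 := by
  have hne : ∀ p ∈ T, p ^ (M.factorization p - 2 * m.factorization p) ≠ 0 :=
    fun p hp => pow_ne_zero _ (hT p hp).ne_zero
  rw [switchedDivisor, Nat.factorization_mul hm (Finset.prod_ne_zero_iff.2 hne),
    Nat.factorization_prod hne, Finsupp.add_apply, Finsupp.finsetSum_apply,
    ← Finset.sum_ite_eq' T q fun p => M.factorization p - 2 * m.factorization p]
  refine congrArg _ (Finset.sum_congr rfl fun p hp => ?_)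
  rw [(hT p hp).factorization_pow, Finsupp.single_apply]

lemma factorization_switchedDivisor_of_subset (hm : m ≠ 0) {T : Finset ℕ}
    (hT : T ⊆ gcdSwitchPrimes N M m) (q : ℕ) : (switchedDivisor M m T).factorization q =
      if q ∈ T then M.factorization q - m.factorization q else m.factorization q := by
  rw [factorization_switchedDivisor hm fun p hp => prime_of_mem_gcdSwitchPrimes (hT hp)]
  split_ifs with hq
  · have := (Finset.mem_filter.1 (hT hq)).2
    omega
  · rfl

lemma switchedDivisor_injOn (hm : m ≠ 0) :
    Set.InjOn (switchedDivisor M m) ((gcdSwitchPrimes N M m).powerset : Set (Finset ℕ)) := by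
  intro T₁ hT₁ T₂ hT₂ h
  rw [Finset.mem_coe, Finset.mem_powerset] at hT₁ hT₂
  ext q
  have hq := congrArg (·.factorization q) h
  simp only [factorization_switchedDivisor_of_subset hm hT₁,
    factorization_switchedDivisor_of_subset hm hT₂] at hq
  split_ifs at hq with h₁ h₂ h₂ <;> first
    | tauto
    | have := (Finset.mem_filter.1 (hT₁ h₁)).2; omega
    | have := (Finset.mem_filter.1 (hT₂ h₂)).2; omega

lemma factorization_gcd_div_self (hM : M ≠ 0) {d : ℕ} (hdM : d ∣ M) (q : ℕ) :
    (d.gcd (M / d)).factorization q =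
      min (d.factorization q) (M.factorization q - d.factorization q) := by
  have hd : d ≠ 0 := ne_zero_of_dvd_ne_zero hM hdM
  have hMd : M / d ≠ 0 := (Nat.div_ne_zero_iff_of_dvd hdM).2 ⟨hM, hd⟩
  rw [Nat.factorization_gcd hd hMd, Finsupp.inf_apply, Nat.factorization_div hdM]
  rfl

lemma gcd_div_self_eq_iff (hM : M ≠ 0) (hNM : N ∣ M) (hmN : m ∣ N) (hm2 : m ^ 2 ∣ M) {d : ℕ}
    (hdN : d ∣ N) : d.gcd (M / d) = m ↔ ∀ q, d.factorization q = m.factorization q ∨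
      (q ∈ gcdSwitchPrimes N M m ∧ d.factorization q = M.factorization q - m.factorization q) := by
  have hN : N ≠ 0 := ne_zero_of_dvd_ne_zero hM hNM
  have hd : d ≠ 0 := ne_zero_of_dvd_ne_zero hN hdN
  have hm : m ≠ 0 := ne_zero_of_dvd_ne_zero hN hmN
  have hdn := (Nat.factorization_le_iff_dvd hd hN).2 hdN
  have hns := (Nat.factorization_le_iff_dvd hN hM).2 hNM
  have hμs := (Nat.factorization_le_iff_dvd (pow_ne_zero 2 hm) hM).2 hm2
  have hgcd : d.gcd (M / d) = m ↔ ∀ q,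
      min (d.factorization q) (M.factorization q - d.factorization q) = m.factorization q := by
    refine ⟨fun h q => ?_, fun h => ?_⟩
    · rw [← factorization_gcd_div_self hM (hdN.trans hNM), h]
    · exact Nat.eq_of_factorization_eq (Nat.gcd_ne_zero_left hd) hm fun q =>
        (factorization_gcd_div_self hM (hdN.trans hNM) q).trans (h q)
  refine hgcd.trans (forall_congr' fun q => ?_)
  have hμq := hμs q
  simp only [Nat.factorization_pow, Finsupp.smul_apply, smul_eq_mul] at hμq
  rw [min_tsub_eq_iff (hdn q) ((hdn q).trans (hns q)) hμq, mem_gcdSwitchPrimes hN]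
  refine or_congr_right
    ⟨fun ⟨h2, hn, ha⟩ => ⟨⟨?_, h2, hn⟩, ha⟩, fun ⟨⟨_, h2, hn⟩, ha⟩ => ⟨h2, hn, ha⟩⟩
  by_contra hq
  rw [Nat.factorization_eq_zero_of_not_prime d hq] at ha
  omega

theorem filter_gcd_div_self_eq_image (hM : M ≠ 0) (hNM : N ∣ M) (hmN : m ∣ N)
    (hm2 : m ^ 2 ∣ M) : N.divisors.filter (fun d => d.gcd (M / d) = m) =
      (gcdSwitchPrimes N M m).powerset.image (switchedDivisor M m) := by
  have hN : N ≠ 0 := ne_zero_of_dvd_ne_zero hM hNM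
  have hm : m ≠ 0 := ne_zero_of_dvd_ne_zero hN hmN
  ext d
  simp only [Finset.mem_filter, Nat.mem_divisors, Finset.mem_image, Finset.mem_powerset]
  constructor
  · rintro ⟨⟨hdN, -⟩, hd⟩
    rw [gcd_div_self_eq_iff hM hNM hmN hm2 hdN] at hd
    set T := (gcdSwitchPrimes N M m).filter fun q => m.factorization q < d.factorization q
    have hT : T ⊆ gcdSwitchPrimes N M m := Finset.filter_subset _ _
    refine ⟨T, hT, Nat.eq_of_factorization_eq ?_ (ne_zero_of_dvd_ne_zero hN hdN) fun q => ?_⟩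
    · exact switchedDivisor_ne_zero hm fun p hp => prime_of_mem_gcdSwitchPrimes (hT hp)
    rw [factorization_switchedDivisor_of_subset hm hT]
    split_ifs with hqT
    · obtain ⟨-, hlt⟩ := Finset.mem_filter.1 hqT
      rcases hd q with h | ⟨-, h⟩ <;> omega
    · rcases hd q with h | ⟨hq, h⟩
      · exact h.symm
      · have := (Finset.mem_filter.1 hq).2
        exact absurd (Finset.mem_filter.2 ⟨hq, by omega⟩) hqT
  · rintro ⟨T, hT, rfl⟩
    have hdN : switchedDivisor M m T ∣ N := by
      rw [← Nat.factorization_le_iff_dvd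
        (switchedDivisor_ne_zero hm fun p hp => prime_of_mem_gcdSwitchPrimes (hT hp)) hN]
      intro q
      rw [factorization_switchedDivisor_of_subset hm hT]
      split_ifs with hq
      · exact (Finset.mem_filter.1 (hT hq)).2.2
      · exact (Nat.factorization_le_iff_dvd hm hN).2 hmN q
    refine ⟨⟨hdN, hN⟩, (gcd_div_self_eq_iff hM hNM hmN hm2 hdN).2 fun q => ?_⟩
    rw [factorization_switchedDivisor_of_subset hm hT]
    split_ifs with hq
    · exact Or.inr ⟨hT hq, rfl⟩
    · exact Or.inl rfl

theorem card_filter_gcd_div_self_eq (hM : M ≠ 0) (hNM : N ∣ M) (hmN : m ∣ N)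
    (hm2 : m ^ 2 ∣ M) : (N.divisors.filter fun d => d.gcd (M / d) = m).card =
      2 ^ (gcdSwitchPrimes N M m).card := by
  have hm : m ≠ 0 := ne_zero_of_dvd_ne_zero (ne_zero_of_dvd_ne_zero hM hNM) hmN
  rw [filter_gcd_div_self_eq_image hM hNM hmN hm2,
    Finset.card_image_of_injOn (switchedDivisor_injOn hm), Finset.card_powerset]

end CountDivisors

section TwoAdic

variable {n : ℕ}

lemma odd_iff_factorization_two_eq_zero (hn : n ≠ 0) : Odd n ↔ n.factorization 2 = 0 := by
  rw [← Nat.not_even_iff_odd, even_iff_two_dvd, Nat.prime_two.dvd_iff_one_le_factorization hn]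
  omega

lemma four_dvd_iff_two_le_factorization (hn : n ≠ 0) : 4 ∣ n ↔ 2 ≤ n.factorization 2 :=
  Nat.prime_two.pow_dvd_iff_le_factorization (k := 2) hn

lemma mod_four_eq_two_iff_factorization_two_eq_one (hn : n ≠ 0) :
    n % 4 = 2 ↔ n.factorization 2 = 1 := by
  have h2 := Nat.prime_two.dvd_iff_one_le_factorization hn
  have h4 := four_dvd_iff_two_le_factorization hn
  omega

end TwoAdic

section Valuations

variable {N k m : ℕ}

lemma factorization_mul_div_two (hN : N ≠ 0) (hk : k ≠ 0) (h2 : 2 ∣ N * k) (q : ℕ) :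
    (N * k / 2).factorization q =
      N.factorization q + k.factorization q - (2 : ℕ).factorization q := by
  rw [Nat.factorization_div h2, Nat.factorization_mul hN hk]
  rfl

lemma two_mul_factorization_add_le (hN : N ≠ 0) (hk : k ≠ 0) (hm2 : 2 * m ^ 2 ∣ N * k)
    (q : ℕ) : 2 * m.factorization q + (2 : ℕ).factorization q ≤
      N.factorization q + k.factorization q := by
  have hm : m ≠ 0 := by rintro rfl; simp [hN, hk] at hm2
  have h := (Nat.factorization_le_iff_dvd (by positivity) (mul_ne_zero hN hk)).2 hm2 q
  rw [Nat.factorization_mul two_ne_zero (pow_ne_zero 2 hm), Nat.factorization_pow,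
    Nat.factorization_mul hN hk] at h
  simp only [Finsupp.add_apply, Finsupp.smul_apply, smul_eq_mul] at h
  omega

lemma sq_dvd_mul_gcd (hm : m ∣ N) (hm2 : m ^ 2 ∣ N * k) : m ^ 2 ∣ N * m.gcd k := by
  rw [← Nat.gcd_mul_left]
  exact Nat.dvd_gcd (by rw [sq, mul_comm]; exact mul_dvd_mul_right hm m) hm2

lemma factorization_mul_gcd_div_sq (hN : N ≠ 0) (hk : k ≠ 0) (hm : m ∣ N)
    (hm2 : m ^ 2 ∣ N * k) (q : ℕ) : (N * m.gcd k / m ^ 2).factorization q =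
      N.factorization q + min (m.factorization q) (k.factorization q) - 2 * m.factorization q := by
  have hm0 : m ≠ 0 := ne_zero_of_dvd_ne_zero hN hm
  rw [Nat.factorization_div (sq_dvd_mul_gcd hm hm2),
    Nat.factorization_mul hN (Nat.gcd_ne_zero_left hm0), Nat.factorization_gcd hm0 hk,
    Nat.factorization_pow]
  rfl

lemma mul_gcd_div_sq_ne_zero (hN : N ≠ 0) (hm : m ∣ N) (hm2 : m ^ 2 ∣ N * k) :
    N * m.gcd k / m ^ 2 ≠ 0 :=
  have hm0 : m ≠ 0 := ne_zero_of_dvd_ne_zero hN hm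
  (Nat.div_ne_zero_iff_of_dvd (sq_dvd_mul_gcd hm hm2)).2
    ⟨mul_ne_zero hN (Nat.gcd_ne_zero_left hm0), pow_ne_zero 2 hm0⟩

lemma div_gcd_ne_zero (hk : k ≠ 0) : k / m.gcd k ≠ 0 :=
  (Nat.div_ne_zero_iff_of_dvd (Nat.gcd_dvd_right m k)).2 ⟨hk, Nat.gcd_ne_zero_right hk⟩

lemma factorization_div_gcd (hm : m ≠ 0) (hk : k ≠ 0) (q : ℕ) :
    (k / m.gcd k).factorization q =
      k.factorization q - min (m.factorization q) (k.factorization q) := by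
  rw [Nat.factorization_div (Nat.gcd_dvd_right m k), Nat.factorization_gcd hm hk]
  rfl

end Valuations

section PmTm

variable {N k m : ℕ}

lemma pm_eq_card_erase_two (hN : N ≠ 0) (hk : k ≠ 0) (hm : m ∣ N) (hm2 : 2 * m ^ 2 ∣ N * k) :
    pm N k m = ((gcdSwitchPrimes N (N * k / 2) m).erase 2).card := by
  have hm0 : m ≠ 0 := ne_zero_of_dvd_ne_zero hN hm
  have hmk : m ^ 2 ∣ N * k := (Dvd.intro_left 2 rfl).trans hm2
  have hX := mul_gcd_div_sq_ne_zero hN hm hmk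
  have hY : k / m.gcd k ≠ 0 := div_gcd_ne_zero hk
  unfold pm
  congr 1
  ext p
  simp only [Finset.mem_filter, Nat.mem_primeFactors, Finset.mem_erase, mem_gcdSwitchPrimes hN]
  by_cases hp : p.Prime
  swap
  · simp [hp]
  by_cases hp2 : p = 2
  · simp [hp2]
  have hle := two_mul_factorization_add_le hN hk hm2 p
  have h2p : (2 : ℕ).factorization p = 0 := Nat.factorization_eq_zero_of_not_dvd fun h =>
    hp2 ((Nat.prime_dvd_prime_iff_eq hp Nat.prime_two).1 h)
  rw [hp.dvd_iff_one_le_factorization hX, hp.dvd_iff_one_le_factorization hY,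
    factorization_mul_gcd_div_sq hN hk hm hmk, factorization_div_gcd hm0 hk,
    factorization_mul_div_two hN hk ((Dvd.intro _ rfl).trans hm2)]
  simp only [hp, hp2, hX, ne_eq, not_false_eq_true, true_and, and_true]
  omega

lemma tm_eq_ite (hN : N ≠ 0) (hk : k ≠ 0) (hm : m ∣ N) (hm2 : 2 * m ^ 2 ∣ N * k) :
    tm N k m = if 2 ∈ gcdSwitchPrimes N (N * k / 2) m then 1 else 0 := by
  have hm0 : m ≠ 0 := ne_zero_of_dvd_ne_zero hN hm
  have hmk : m ^ 2 ∣ N * k := (Dvd.intro_left 2 rfl).trans hm2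
  have hX := mul_gcd_div_sq_ne_zero hN hm hmk
  have hY : k / m.gcd k ≠ 0 := div_gcd_ne_zero hk
  have hle := two_mul_factorization_add_le hN hk hm2 2
  unfold tm
  simp only [odd_iff_factorization_two_eq_zero hX, four_dvd_iff_two_le_factorization hY,
    mod_four_eq_two_iff_factorization_two_eq_one hX, odd_iff_factorization_two_eq_zero hY,
    factorization_mul_gcd_div_sq hN hk hm hmk, factorization_div_gcd hm0 hk,
    mem_gcdSwitchPrimes hN, factorization_mul_div_two hN hk ((Dvd.intro _ rfl).trans hm2),
    Nat.prime_two.factorization_self, Nat.prime_two, true_and]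
  rw [Nat.prime_two.factorization_self] at hle
  split_ifs <;> omega

theorem pm_add_tm_eq_card_gcdSwitchPrimes (hN : N ≠ 0) (hk : k ≠ 0) (hm : m ∣ N)
    (hm2 : 2 * m ^ 2 ∣ N * k) :
    pm N k m + tm N k m = (gcdSwitchPrimes N (N * k / 2) m).card := by
  rw [pm_eq_card_erase_two hN hk hm hm2, tm_eq_ite hN hk hm hm2]
  split_ifs with h
  · exact Finset.card_erase_add_one h
  · rw [Finset.erase_eq_of_notMem h, add_zero]

end PmTm

theorem card_divisors_with_gcd_eq_even_even_case_general (N k m : ℕ) (hN : 0 < N)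
    (hk : 0 < k) (hkeven : Even k) (hm : m ∣ N) (hm2 : 2 * m ^ 2 ∣ N * k) :
    (N.divisors.filter (fun d => Nat.gcd d (N * k / (2 * d)) = m)).card
      = 2 ^ (pm N k m + tm N k m) := by
  have hNM : N ∣ N * k / 2 := by
    rw [Nat.mul_div_assoc N hkeven.two_dvd]
    exact dvd_mul_right N _
  have hM : N * k / 2 ≠ 0 := (Nat.div_ne_zero_iff_of_dvd ((Dvd.intro _ rfl).trans hm2)).2
    ⟨mul_ne_zero hN.ne' hk.ne', two_ne_zero⟩
  simp_rw [← Nat.div_div_eq_div_mul]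
  rw [card_filter_gcd_div_self_eq hM hNM hm (Nat.dvd_div_of_mul_dvd hm2),
    pm_add_tm_eq_card_gcdSwitchPrimes hN.ne' hk.ne' hm hm2]

theorem card_divisors_with_gcd_eq_even_even_case (N k m : ℕ) (hN : 0 < N) (hNeven : Even N)
    (hk : 0 < k) (hkeven : Even k) (hm : m ∣ N) (hm2 : 2 * m ^ 2 ∣ N * k) :
    (N.divisors.filter (fun d => Nat.gcd d (N * k / (2 * d)) = m)).card
      = 2 ^ (pm N k m + tm N k m) :=
  card_divisors_with_gcd_eq_even_even_case_general N k m hN hk hkeven hm hm2
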